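/- Every finite simple graph G admits an edge-intersection representation by paths on a rectangular grid (an EPG representation) that satisfies the Helly property: vertices correspond to paths in the grid, two vertices are adjacent if and only if their paths share a grid edge, and every pairwise edge-intersecting subfamily of paths has a grid edge common to all of them. -/

import Mathlib

/-- A grid edge: a lattice point together with a direction; `true` means the
horizontal edge from `pt` to `pt + (1,0)`, `false` the vertical edge from `pt`
to `pt + (0,1)`. -/
structure GridEdge where
  pt : ℤ × ℤ
  horiz : Bool
deriving DecidableEq

/-- The two endpoints of a grid edge. -/
def GridEdge.endpoints (e : GridEdge) : Finset (ℤ × ℤ) :=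
  {e.pt, if e.horiz then (e.pt.1 + 1, e.pt.2) else (e.pt.1, e.pt.2 + 1)}

/-- Two distinct grid edges are adjacent when they share an endpoint. -/
def GridEdge.adj (e f : GridEdge) : Prop :=
  e ≠ f ∧ (e.endpoints ∩ f.endpoints).Nonempty

/-- A simple path in the integer grid, given by its sequence of edges:
consecutive edges are adjacent, all edges are distinct, and
non-consecutive edges are non-adjacent. -/
structure GridPath where
  edges : List GridEdge
  nonempty : edges ≠ []
  nodup : edges.Nodup
  chain : edges.Chain' GridEdge.adj
  simple : ∀ i j : ℕ, i + 1 < j → ∀ (hi : i < edges.length) (hj : j < edges.length),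
    ¬ GridEdge.adj (edges.get ⟨i, hi⟩) (edges.get ⟨j, hj⟩)

/-- The number of bends of a grid path: consecutive pairs of edges with
different directions. -/
def GridPath.bends (P : GridPath) : ℕ :=
  ((P.edges.zip P.edges.tail).filter fun q => q.1.horiz != q.2.horiz).length

/-- Two paths (edge-)intersect when they share a grid edge. -/
def GridPath.Inter (P Q : GridPath) : Prop :=
  ∃ e : GridEdge, e ∈ P.edges ∧ e ∈ Q.edges

/-- A relevant edge of a path: an extremity (first or last) edge or a bend edge. -/
def GridPath.IsRelevant (P : GridPath) (e : GridEdge) : Prop :=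
  P.edges.head? = some e ∨ P.edges.getLast? = some e ∨
    ∃ q ∈ P.edges.zip P.edges.tail, q.1.horiz ≠ q.2.horiz ∧ (e = q.1 ∨ e = q.2)

/-- An EPG representation of a graph: vertices are assigned grid paths, and two
distinct vertices are adjacent iff their paths share a grid edge. -/
def IsEPGRep {V : Type*} (G : SimpleGraph V) (P : V → GridPath) : Prop :=
  ∀ u v : V, u ≠ v → (G.Adj u v ↔ (P u).Inter (P v))

/-- The Helly property for a family of grid paths: every pairwise
edge-intersecting subfamily has a grid edge common to all its members. -/
def HellyEPG {ι : Type*} (P : ι → GridPath) : Prop :=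
  ∀ T : Set ι, (∀ i ∈ T, ∀ j ∈ T, (P i).Inter (P j)) →
    ∃ e : GridEdge, ∀ i ∈ T, e ∈ (P i).edges

/-- The set of maximal cliques of a graph. -/
def maxCliques {V : Type*} (G : SimpleGraph V) : Set (Set V) :=
  {s | G.IsClique s ∧ ∀ t : Set V, G.IsClique t → s ⊆ t → s = t}

def UnitStep (p q : ℤ × ℤ) : Prop :=
  (q.1 = p.1 + 1 ∧ q.2 = p.2) ∨ (q.1 = p.1 ∧ q.2 = p.2 + 1) ∨
  (p.1 = q.1 + 1 ∧ p.2 = q.2) ∨ (p.1 = q.1 ∧ p.2 = q.2 + 1)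

def mkEdge (p q : ℤ × ℤ) : GridEdge :=
  if q.1 = p.1 + 1 ∧ q.2 = p.2 then ⟨p, true⟩
  else if q.1 = p.1 ∧ q.2 = p.2 + 1 then ⟨p, false⟩
  else if p.1 = q.1 + 1 ∧ p.2 = q.2 then ⟨q, true⟩
  else ⟨q, false⟩

lemma mkEdge_right (p : ℤ × ℤ) : mkEdge p (p.1 + 1, p.2) = ⟨p, true⟩ := by
  simp [mkEdge]

lemma mkEdge_up (p : ℤ × ℤ) : mkEdge p (p.1, p.2 + 1) = ⟨p, false⟩ := by
  unfold mkEdge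
  rw [if_neg (by simp), if_pos (by simp)]

lemma mkEdge_down (p : ℤ × ℤ) : mkEdge (p.1, p.2 + 1) p = ⟨p, false⟩ := by
  unfold mkEdge
  split_ifs with h1 h2 h3
  · exact absurd h1 (by simp; try omega)
  · exact absurd h2 (by simp; try omega)
  · exact absurd h3 (by simp; try omega)
  · rfl

lemma mkEdge_endpoints {p q : ℤ × ℤ} (h : UnitStep p q) :
    (mkEdge p q).endpoints = {p, q} := by
  rcases h with ⟨h1, h2⟩ | ⟨h1, h2⟩ | ⟨h1, h2⟩ | ⟨h1, h2⟩
  · have : q = (p.1 + 1, p.2) := by ext <;> simp [h1, h2]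
    subst this; rw [mkEdge_right]; simp [GridEdge.endpoints]
  · have : q = (p.1, p.2 + 1) := by ext <;> simp [h1, h2]
    subst this; rw [mkEdge_up]; simp [GridEdge.endpoints]
  · have : p = (q.1 + 1, q.2) := by ext <;> simp [h1, h2]
    subst this
    have : mkEdge (q.1 + 1, q.2) q = ⟨q, true⟩ := by
      unfold mkEdge
      split_ifs with h1 h2 h3
      · exact absurd h1 (by simp; try omega)
      · exact absurd h2 (by simp; try omega)
      · rfl
      · exact absurd (by simp : ((q.1+1,q.2).1 = q.1 + 1 ∧ (q.1+1,q.2).2 = q.2)) h3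
    rw [this]; simp [GridEdge.endpoints, Finset.pair_comm]
  · have : p = (q.1, q.2 + 1) := by ext <;> simp [h1, h2]
    subst this; rw [mkEdge_down]; simp [GridEdge.endpoints, Finset.pair_comm]

def edgesOf (pts : List (ℤ × ℤ)) : List GridEdge :=
  List.zipWith mkEdge pts pts.tail

lemma length_edgesOf (pts : List (ℤ × ℤ)) : (edgesOf pts).length = pts.length - 1 := by
  simp [edgesOf]

lemma getElem_edgesOf (pts : List (ℤ × ℤ)) (i : ℕ) (h : i < (edgesOf pts).length) :
    (edgesOf pts)[i] = mkEdge (pts[i]'(by rw [length_edgesOf] at h; omega))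
      (pts[i+1]'(by rw [length_edgesOf] at h; omega)) := by
  simp [edgesOf, List.getElem_zipWith, List.getElem_tail]

lemma mem_edgesOf {e : GridEdge} {pts : List (ℤ × ℤ)} :
    e ∈ edgesOf pts ↔ ∃ i : ℕ, ∃ h : i + 1 < pts.length,
      e = mkEdge (pts[i]'(by omega)) (pts[i+1]'h) := by
  rw [List.mem_iff_getElem]
  constructor
  · rintro ⟨i, h, rfl⟩
    refine ⟨i, by rw [length_edgesOf] at h; omega, ?_⟩
    simp [getElem_edgesOf pts i h]
  · rintro ⟨i, h, rfl⟩
    exact ⟨i, by rw [length_edgesOf]; omega, getElem_edgesOf pts i _⟩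

lemma pair_inter_nonempty {a b c d : ℤ × ℤ} :
    (({a, b} : Finset (ℤ × ℤ)) ∩ {c, d}).Nonempty ↔ a = c ∨ a = d ∨ b = c ∨ b = d := by
  constructor
  · rintro ⟨x, hx⟩
    simp only [Finset.mem_inter, Finset.mem_insert, Finset.mem_singleton] at hx
    rcases hx with ⟨h1 | h1, h2 | h2⟩ <;> subst h1 <;> tauto
  · rintro (rfl | rfl | rfl | rfl)
    · exact ⟨a, by simp⟩
    · exact ⟨a, by simp⟩
    · exact ⟨b, by simp⟩
    · exact ⟨b, by simp⟩

def mkPath (pts : List (ℤ × ℤ)) (h2 : 2 ≤ pts.length) (hnd : pts.Nodup)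
    (hch : pts.Chain' UnitStep) : GridPath where
  edges := edgesOf pts
  nonempty := by
    have := length_edgesOf pts
    intro h; rw [h] at this; simp at this; omega
  nodup := by
    have hinj : ∀ i j : ℕ, ∀ (hi : i < pts.length) (hj : j < pts.length),
        pts[i] = pts[j] → i = j := by
      intro i j hi hj hij
      exact (List.Nodup.getElem_inj_iff hnd).mp hij
    have hstep : ∀ i : ℕ, ∀ h : i + 1 < pts.length, UnitStep pts[i] pts[i+1] := by
      intro i h
      have := List.isChain_iff_getElem.mp hch i (by omega)
      simpa using this
    rw [List.nodup_iff_injective_get]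
    intro ⟨i, hi⟩ ⟨j, hj⟩ hij
    simp only [List.get_eq_getElem] at hij
    rw [getElem_edgesOf, getElem_edgesOf] at hij
    have hi' : i + 1 < pts.length := by rw [length_edgesOf] at hi; omega
    have hj' : j + 1 < pts.length := by rw [length_edgesOf] at hj; omega
    have hepts := congrArg GridEdge.endpoints hij
    rw [mkEdge_endpoints (hstep i hi'), mkEdge_endpoints (hstep j hj')] at hepts
    have h1 : pts[i] = pts[j] ∨ pts[i] = pts[j+1] := by
      have : pts[i] ∈ ({pts[j], pts[j+1]} : Finset (ℤ × ℤ)) := by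
        rw [← hepts]; simp
      simpa using this
    have h2' : pts[i+1] = pts[j] ∨ pts[i+1] = pts[j+1] := by
      have : pts[i+1] ∈ ({pts[j], pts[j+1]} : Finset (ℤ × ℤ)) := by
        rw [← hepts]; simp
      simpa using this
    have e1 : i = j ∨ i = j + 1 := by
      rcases h1 with h | h
      · exact Or.inl (hinj _ _ (by omega) (by omega) h)
      · exact Or.inr (hinj _ _ (by omega) (by omega) h)
    have e2 : i + 1 = j ∨ i + 1 = j + 1 := by
      rcases h2' with h | h
      · exact Or.inl (hinj _ _ (by omega) (by omega) h)
      · exact Or.inr (hinj _ _ (by omega) (by omega) h)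
    have : i = j := by omega
    exact Fin.ext this
  chain := by
    have hstep : ∀ i : ℕ, ∀ h : i + 1 < pts.length, UnitStep pts[i] pts[i+1] := by
      intro i h
      have := List.isChain_iff_getElem.mp hch i (by omega)
      simpa using this
    show List.IsChain _ _
    rw [List.isChain_iff_getElem]
    intro i hi
    rw [length_edgesOf] at hi
    rw [getElem_edgesOf, getElem_edgesOf]
    have h1 : i + 1 < pts.length := by omega
    have h2'' : i + 1 + 1 < pts.length := by omega
    constructor
    · intro heq
      have hepts := congrArg GridEdge.endpoints heq
      rw [mkEdge_endpoints (hstep i h1), mkEdge_endpoints (hstep (i+1) h2'')] at hepts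
      have : pts[i] ∈ ({pts[i+1], pts[i+2]} : Finset (ℤ × ℤ)) := by rw [← hepts]; simp
      simp only [Finset.mem_insert, Finset.mem_singleton] at this
      rcases this with h | h
      · have := (List.Nodup.getElem_inj_iff hnd).mp h; omega
      · have := (List.Nodup.getElem_inj_iff hnd).mp h; omega
    · rw [mkEdge_endpoints (hstep i h1), mkEdge_endpoints (hstep (i+1) h2'')]
      rw [pair_inter_nonempty]
      tauto
  simple := by
    have hstep : ∀ i : ℕ, ∀ h : i + 1 < pts.length, UnitStep pts[i] pts[i+1] := by
      intro i h
      have := List.isChain_iff_getElem.mp hch i (by omega)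
      simpa using this
    intro i j hij hi hj hadj
    rw [length_edgesOf] at hi hj
    obtain ⟨-, hne⟩ := hadj
    simp only [List.get_eq_getElem] at hne
    rw [getElem_edgesOf, getElem_edgesOf] at hne
    rw [mkEdge_endpoints (hstep i (by omega)), mkEdge_endpoints (hstep j (by omega)),
      pair_inter_nonempty] at hne
    rcases hne with h | h | h | h <;>
      · have := (List.Nodup.getElem_inj_iff hnd).mp h; omega

section MapRange

variable {α : Type*}

lemma head?_map_range (f : ℕ → α) {n : ℕ} (h : 0 < n) :
    ((List.range n).map f).head? = some (f 0) := by
  rw [List.head?_eq_getElem?, List.getElem?_map, List.getElem?_range (by simpa using h)]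
  rfl

lemma getLast?_map_range (f : ℕ → α) {n : ℕ} (h : 0 < n) :
    ((List.range n).map f).getLast? = some (f (n - 1)) := by
  rw [List.getLast?_eq_getElem?]
  simp only [List.length_map, List.length_range]
  rw [List.getElem?_map, List.getElem?_range (by omega)]
  rfl

lemma nodup_map_range (f : ℕ → α) {n : ℕ}
    (hf : ∀ i < n, ∀ j < n, f i = f j → i = j) :
    (((List.range n).map f)).Nodup := by
  refine List.Nodup.map_on ?_ (List.nodup_range (n := n))
  intro x hx y hy
  simp only [List.mem_range] at hx hy
  exact hf x hx y hy

lemma chain'_map_range {R : α → α → Prop} (f : ℕ → α) {n : ℕ}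
    (hR : ∀ i, i + 1 < n → R (f i) (f (i + 1))) :
    List.Chain' R ((List.range n).map f) := by
  show List.IsChain _ _
  rw [List.isChain_map]
  cases n with
  | zero => simp
  | succ m =>
    rw [List.isChain_range_succ]
    intro i hi
    exact hR i (by omega)

lemma mem_map_range {f : ℕ → α} {n : ℕ} {p : α} :
    p ∈ (List.range n).map f ↔ ∃ t, t < n ∧ f t = p := by
  simp [List.mem_map, List.mem_range]

lemma mem_edgesOf_map_range {f : ℕ → ℤ × ℤ} {n : ℕ} {e : GridEdge} :
    e ∈ edgesOf ((List.range n).map f) ↔ ∃ i, i + 1 < n ∧ e = mkEdge (f i) (f (i + 1)) := by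
  rw [mem_edgesOf]
  constructor
  · rintro ⟨i, h, rfl⟩
    simp only [List.length_map, List.length_range] at h
    refine ⟨i, h, ?_⟩
    congr 1 <;> simp
  · rintro ⟨i, h, rfl⟩
    refine ⟨i, by simpa using h, ?_⟩
    congr 1 <;> simp

end MapRange

lemma edgesOf_cons₂ (a b : ℤ × ℤ) (l : List (ℤ × ℤ)) :
    edgesOf (a :: b :: l) = mkEdge a b :: edgesOf (b :: l) := rfl

lemma edgesOf_append (l1 l2 : List (ℤ × ℤ)) (h1 : l1 ≠ []) (h2 : l2 ≠ []) :
    edgesOf (l1 ++ l2) =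
      edgesOf l1 ++ mkEdge (l1.getLast h1) (l2.head h2) :: edgesOf l2 := by
  induction l1 with
  | nil => simp at h1
  | cons a t ih =>
    cases t with
    | nil =>
      cases l2 with
      | nil => simp at h2
      | cons c t2 => simp [edgesOf_cons₂, edgesOf]
    | cons b t' =>
      have := ih (by simp)
      simp only [List.cons_append] at *
      rw [edgesOf_cons₂, this, edgesOf_cons₂]
      simp [List.getLast_cons]

def towerPts (x r H : ℤ) : List (ℤ × ℤ) :=
  ((List.range ((H - r).toNat + 1)).map fun t : ℕ => ((x, r + (t : ℤ)) : ℤ × ℤ)) ++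
  ((List.range ((H - r).toNat + 1)).map fun t : ℕ => ((x + 1, H - (t : ℤ)) : ℤ × ℤ))

def connPts (x x' r : ℤ) : List (ℤ × ℤ) :=
  (List.range (x' - x - 2).toNat).map fun t : ℕ => ((x + 2 + (t : ℤ), r) : ℤ × ℤ)

def pathPts (r H : ℤ) : List ℤ → List (ℤ × ℤ)
  | [] => []
  | [x] => towerPts x r H
  | x :: x' :: rest => towerPts x r H ++ connPts x x' r ++ pathPts r H (x' :: rest)

lemma towerPts_ne_nil (x r H : ℤ) : towerPts x r H ≠ [] := by
  simp [towerPts]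

lemma connPts_ne_nil {x x' : ℤ} (r : ℤ) (h : x + 3 ≤ x') : connPts x x' r ≠ [] := by
  simp [connPts]
  omega

lemma pathPts_ne_nil (r H : ℤ) {ks : List ℤ} (h : ks ≠ []) : pathPts r H ks ≠ [] := by
  match ks with
  | [x] => simpa [pathPts] using towerPts_ne_nil x r H
  | x :: x' :: rest =>
    simp only [pathPts]
    intro hc
    rcases List.append_eq_nil_iff.mp hc with ⟨hc1, -⟩
    rcases List.append_eq_nil_iff.mp hc1 with ⟨hc2, -⟩
    exact towerPts_ne_nil x r H hc2

lemma towerPts_head? (x r H : ℤ) (hr : r ≤ H) : (towerPts x r H).head? = some (x, r) := by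
  rw [towerPts, List.head?_append, head?_map_range _ (by omega)]
  simp

lemma towerPts_getLast? (x r H : ℤ) (hr : r ≤ H) :
    (towerPts x r H).getLast? = some (x + 1, r) := by
  rw [towerPts, List.getLast?_append, getLast?_map_range _ (by omega)]
  simp only [Option.or]
  congr 2
  omega

lemma connPts_head? {x x' : ℤ} (r : ℤ) (h : x + 3 ≤ x') :
    (connPts x x' r).head? = some (x + 2, r) := by
  rw [connPts, head?_map_range _ (by omega)]
  simp

lemma connPts_getLast? {x x' : ℤ} (r : ℤ) (h : x + 3 ≤ x') :
    (connPts x x' r).getLast? = some (x' - 1, r) := by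
  rw [connPts, getLast?_map_range _ (by omega)]
  congr 2
  omega

lemma pathPts_head? (r H : ℤ) (hr : r ≤ H) (x : ℤ) (ks : List ℤ) :
    (pathPts r H (x :: ks)).head? = some (x, r) := by
  match ks with
  | [] => rw [pathPts]; exact towerPts_head? x r H hr
  | x' :: rest =>
    rw [pathPts, List.head?_append, List.head?_append, towerPts_head? x r H hr]
    simp

lemma mem_towerPts {p : ℤ × ℤ} {x r H : ℤ} (hr : r ≤ H) (hp : p ∈ towerPts x r H) :
    (p.1 = x ∨ p.1 = x + 1) ∧ r ≤ p.2 ∧ p.2 ≤ H := by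
  rw [towerPts, List.mem_append, mem_map_range, mem_map_range] at hp
  rcases hp with ⟨t, ht, rfl⟩ | ⟨t, ht, rfl⟩ <;> simp <;> omega

lemma mem_connPts {p : ℤ × ℤ} {x x' r : ℤ} (hp : p ∈ connPts x x' r) :
    x + 2 ≤ p.1 ∧ p.1 ≤ x' - 1 ∧ p.2 = r := by
  rw [connPts, mem_map_range] at hp
  rcases hp with ⟨t, ht, rfl⟩ <;> simp <;> omega

lemma mem_pathPts_lb {p : ℤ × ℤ} {r H : ℤ} {ks : List ℤ} {c : ℤ} (hr : r ≤ H)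
    (hc : ∀ y ∈ ks, c ≤ y) (hp : p ∈ pathPts r H ks) : c ≤ p.1 := by
  match ks with
  | [] => simp [pathPts] at hp
  | [x] =>
    rw [pathPts] at hp
    have := mem_towerPts hr hp
    have := hc x (by simp)
    omega
  | x :: x' :: rest =>
    rw [pathPts] at hp
    simp only [List.mem_append] at hp
    rcases hp with (hp | hp) | hp
    · have := mem_towerPts hr hp
      have := hc x (by simp)
      omega
    · have := mem_connPts hp
      have := hc x (by simp)
      omega
    · exact mem_pathPts_lb hr (fun y hy => hc y (by simp at hy ⊢; tauto)) hp

lemma getLast_eq_of_getLast? {α : Type*} {l : List α} (h : l ≠ []) {a : α}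
    (ha : l.getLast? = some a) : l.getLast h = a := by
  rw [List.getLast?_eq_getLast h] at ha
  exact (Option.some.inj ha)

lemma head_eq_of_head? {α : Type*} {l : List α} (h : l ≠ []) {a : α}
    (ha : l.head? = some a) : l.head h = a := by
  rw [List.head?_eq_head h] at ha
  exact (Option.some.inj ha)

lemma towerPts_nodup (x r H : ℤ) (hr : r ≤ H) : (towerPts x r H).Nodup := by
  rw [towerPts]
  refine List.Nodup.append ?_ ?_ ?_
  · exact nodup_map_range _ (by intro i hi j hj hij; simp at hij; try omega)
  · exact nodup_map_range _ (by intro i hi j hj hij; simp at hij; try omega)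
  · intro p hp hp'
    rw [mem_map_range] at hp hp'
    obtain ⟨t, ht, rfl⟩ := hp
    obtain ⟨t', ht', h⟩ := hp'
    simp at h
    try omega

lemma connPts_nodup (x x' r : ℤ) : (connPts x x' r).Nodup :=
  nodup_map_range _ (by intro i hi j hj hij; simp at hij; try omega)

lemma towerPts_chain (x r H : ℤ) (hr : r ≤ H) : (towerPts x r H).Chain' UnitStep := by
  rw [towerPts]
  refine List.IsChain.append ?_ ?_ ?_
  · refine chain'_map_range _ (fun i hi => ?_)
    simp [UnitStep]
    try push_cast
    try omega
  · refine chain'_map_range _ (fun i hi => ?_)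
    simp [UnitStep]
    try push_cast
    try omega
  · intro a ha b hb
    rw [getLast?_map_range _ (by omega)] at ha
    rw [head?_map_range _ (by omega)] at hb
    obtain rfl := Option.some.inj ha
    obtain rfl := Option.some.inj hb
    simp [UnitStep]
    try push_cast
    try omega

lemma connPts_chain (x x' r : ℤ) : (connPts x x' r).Chain' UnitStep := by
  refine chain'_map_range _ (fun i hi => ?_)
  simp [UnitStep]
  try push_cast
  try omega

lemma gap3_trans : IsTrans ℤ (fun a b => a + 3 ≤ b) := ⟨fun a b c h1 h2 => by omega⟩

lemma pathPts_nodup (r H : ℤ) (hr : r ≤ H) {ks : List ℤ}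
    (hgap : ks.Chain' (fun a b => a + 3 ≤ b)) : (pathPts r H ks).Nodup := by
  haveI := gap3_trans
  match ks with
  | [] => simp [pathPts]
  | [x] => rw [pathPts]; exact towerPts_nodup x r H hr
  | x :: x' :: rest =>
    rw [pathPts]
    have hpw := List.isChain_iff_pairwise.mp hgap
    have hx' : ∀ y ∈ x' :: rest, x' ≤ y := by
      intro y hy
      rcases List.mem_cons.mp hy with rfl | hy
      · omega
      · have h2 := (List.pairwise_cons.mp (List.pairwise_cons.mp hpw).2).1 y hy
        omega
    refine List.Nodup.append (List.Nodup.append ?_ ?_ ?_) ?_ ?_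
    · exact towerPts_nodup x r H hr
    · exact connPts_nodup x x' r
    · intro p hp hp'
      have h1 := mem_towerPts hr hp
      have h2 := mem_connPts hp'
      omega
    · exact pathPts_nodup r H hr hgap.tail
    · intro p hp hp'
      have h3 := mem_pathPts_lb hr hx' hp'
      rcases List.mem_append.mp hp with hp | hp
      · have h1 := mem_towerPts hr hp
        have hg : x + 3 ≤ x' := by
          rcases hgap with _ | _ | ⟨h, -⟩
          exact h
        omega
      · have h2 := mem_connPts hp
        omega

lemma pathPts_chain (r H : ℤ) (hr : r ≤ H) {ks : List ℤ}
    (hgap : ks.Chain' (fun a b => a + 3 ≤ b)) : (pathPts r H ks).Chain' UnitStep := by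
  match ks with
  | [] => simp [pathPts]; exact List.IsChain.nil
  | [x] => rw [pathPts]; exact towerPts_chain x r H hr
  | x :: x' :: rest =>
    have hg : x + 3 ≤ x' := by rcases hgap with _ | _ | ⟨h, -⟩; exact h
    rw [pathPts]
    refine List.IsChain.append (List.IsChain.append ?_ ?_ ?_) ?_ ?_
    · exact towerPts_chain x r H hr
    · exact connPts_chain x x' r
    · intro a ha b hb
      rw [towerPts_getLast? x r H hr] at ha
      rw [connPts_head? r hg] at hb
      obtain rfl := Option.some.inj ha
      obtain rfl := Option.some.inj hb
      simp [UnitStep]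
      try push_cast
      try omega
    · exact pathPts_chain r H hr hgap.tail
    · intro a ha b hb
      rw [List.getLast?_append, connPts_getLast? r hg] at ha
      rw [pathPts_head? r H hr] at hb
      simp only [Option.some_or] at ha
      obtain rfl := Option.some.inj ha
      obtain rfl := Option.some.inj hb
      simp [UnitStep]
      try push_cast
      try omega

lemma mkEdge_vert (x a b : ℤ) (h : b = a + 1) : mkEdge (x, a) (x, b) = ⟨(x, a), false⟩ := by
  subst h; exact mkEdge_up (x, a)

lemma mkEdge_vert' (x a b : ℤ) (h : a = b + 1) : mkEdge (x, a) (x, b) = ⟨(x, b), false⟩ := by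
  subst h; exact mkEdge_down (x, b)

lemma mkEdge_horiz (a b y : ℤ) (h : b = a + 1) : mkEdge (a, y) (b, y) = ⟨(a, y), true⟩ := by
  subst h; exact mkEdge_right (a, y)

lemma towerPts_eq (x r H : ℤ) : towerPts x r H =
    ((List.range ((H - r).toNat + 1)).map fun t : ℕ => ((x, r + (t : ℤ)) : ℤ × ℤ)) ++
    ((List.range ((H - r).toNat + 1)).map fun t : ℕ => ((x + 1, H - (t : ℤ)) : ℤ × ℤ)) := rfl

lemma edges_towerPts {e : GridEdge} {x r H : ℤ} (hr : r ≤ H)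
    (he : e ∈ edgesOf (towerPts x r H)) :
    e = ⟨(x, H), true⟩ ∨ (e.horiz = false ∧ (e.pt.1 = x ∨ e.pt.1 = x + 1)) := by
  rw [towerPts_eq, edgesOf_append _ _ (by simp) (by simp)] at he
  rw [List.mem_append, List.mem_cons] at he
  rcases he with he | he | he
  · rw [mem_edgesOf_map_range] at he
    obtain ⟨i, hi, rfl⟩ := he
    rw [mkEdge_vert _ _ _ (by push_cast; ring)]
    right; simp
  · subst he
    rw [getLast_eq_of_getLast? (by simp) (getLast?_map_range _ (by omega)),
      head_eq_of_head? (by simp) (head?_map_range _ (by omega))]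
    left
    have h1 : ((x : ℤ), r + (((H - r).toNat + 1 - 1 : ℕ) : ℤ)) = ((x : ℤ), H) := by
      simp; omega
    have h2 : ((x + 1 : ℤ), H - ((0 : ℕ) : ℤ)) = ((x + 1 : ℤ), H) := by simp
    rw [h1, h2, mkEdge_horiz _ _ _ rfl]
  · rw [mem_edgesOf_map_range] at he
    obtain ⟨i, hi, rfl⟩ := he
    rw [mkEdge_vert' _ _ _ (by push_cast; ring)]
    right; simp

lemma topEdge_mem_towerPts (x r H : ℤ) (hr : r ≤ H) :
    (⟨(x, H), true⟩ : GridEdge) ∈ edgesOf (towerPts x r H) := by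
  rw [towerPts_eq, edgesOf_append _ _ (by simp) (by simp)]
  rw [List.mem_append, List.mem_cons]
  right; left
  rw [getLast_eq_of_getLast? (by simp) (getLast?_map_range _ (by omega)),
    head_eq_of_head? (by simp) (head?_map_range _ (by omega))]
  have h1 : ((x : ℤ), r + (((H - r).toNat + 1 - 1 : ℕ) : ℤ)) = ((x : ℤ), H) := by
    simp; omega
  have h2 : ((x + 1 : ℤ), H - ((0 : ℕ) : ℤ)) = ((x + 1 : ℤ), H) := by simp
  rw [h1, h2, mkEdge_horiz _ _ _ rfl]

lemma edges_connPts {e : GridEdge} {x x' r : ℤ} (he : e ∈ edgesOf (connPts x x' r)) :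
    e.horiz = true ∧ e.pt.2 = r := by
  rw [connPts, mem_edgesOf_map_range] at he
  obtain ⟨i, hi, rfl⟩ := he
  rw [mkEdge_horiz _ _ _ (by push_cast; ring)]
  exact ⟨rfl, rfl⟩

lemma edges_pathPts {e : GridEdge} {r H : ℤ} {ks : List ℤ} (hr : r ≤ H)
    (hgap : ks.Chain' (fun a b => a + 3 ≤ b)) (he : e ∈ edgesOf (pathPts r H ks)) :
    (e.horiz = true ∧ e.pt.2 = r) ∨ (e.horiz = true ∧ e.pt.2 = H ∧ e.pt.1 ∈ ks) ∨
    (e.horiz = false ∧ ∃ x ∈ ks, e.pt.1 = x ∨ e.pt.1 = x + 1) := by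
  match ks with
  | [] => simp [pathPts, edgesOf] at he
  | [x] =>
    rw [pathPts] at he
    rcases edges_towerPts hr he with h | ⟨h1, h2⟩
    · subst h; right; left; simp
    · right; right; exact ⟨h1, x, by simp, h2⟩
  | x :: x' :: rest =>
    have hg : x + 3 ≤ x' := by rcases hgap with _ | _ | ⟨h, -⟩; exact h
    rw [pathPts] at he
    rw [edgesOf_append _ _ (by
        intro hc
        rcases List.append_eq_nil_iff.mp hc with ⟨hc1, -⟩
        exact towerPts_ne_nil x r H hc1) (pathPts_ne_nil r H (by simp)),
      edgesOf_append _ _ (towerPts_ne_nil x r H) (connPts_ne_nil r hg)] at he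
    simp only [List.mem_append, List.mem_cons] at he
    rcases he with (he | he | he) | he | he
    · rcases edges_towerPts hr he with h | ⟨h1, h2⟩
      · subst h; right; left; simp
      · right; right; exact ⟨h1, x, by simp, h2⟩
    · subst he
      rw [getLast_eq_of_getLast? _ (towerPts_getLast? x r H hr),
        head_eq_of_head? _ (connPts_head? r hg), mkEdge_horiz _ _ _ (by ring)]
      left; exact ⟨rfl, rfl⟩
    · left; exact edges_connPts he
    · subst he
      have hL : (towerPts x r H ++ connPts x x' r).getLast? = some (x' - 1, r) := by
        rw [List.getLast?_append, connPts_getLast? r hg]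
        simp
      rw [getLast_eq_of_getLast? _ hL,
        head_eq_of_head? _ (pathPts_head? r H hr x' rest), mkEdge_horiz _ _ _ (by ring)]
      left; exact ⟨rfl, rfl⟩
    · rcases edges_pathPts hr hgap.tail he with h | ⟨h1, h2, h3⟩ | ⟨h1, y, hy, h2⟩
      · left; exact h
      · right; left; exact ⟨h1, h2, by simp at h3 ⊢; tauto⟩
      · right; right; exact ⟨h1, y, by simp at hy ⊢; tauto, h2⟩

lemma topEdge_mem_pathPts {x : ℤ} {r H : ℤ} {ks : List ℤ} (hr : r ≤ H)
    (hgap : ks.Chain' (fun a b => a + 3 ≤ b)) (hx : x ∈ ks) :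
    (⟨(x, H), true⟩ : GridEdge) ∈ edgesOf (pathPts r H ks) := by
  match ks with
  | [] => simp at hx
  | [y] =>
    rw [pathPts]
    rcases List.mem_singleton.mp hx with rfl
    exact topEdge_mem_towerPts x r H hr
  | y :: x' :: rest =>
    have hg : y + 3 ≤ x' := by rcases hgap with _ | _ | ⟨h, -⟩; exact h
    rw [pathPts]
    rw [edgesOf_append _ _ (by
        intro hc
        rcases List.append_eq_nil_iff.mp hc with ⟨hc1, -⟩
        exact towerPts_ne_nil y r H hc1) (pathPts_ne_nil r H (by simp)),
      edgesOf_append _ _ (towerPts_ne_nil y r H) (connPts_ne_nil r hg)]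
    simp only [List.mem_append, List.mem_cons]
    rcases List.mem_cons.mp hx with rfl | hx
    · exact Or.inl (Or.inl (topEdge_mem_towerPts x r H hr))
    · exact Or.inr (Or.inr (topEdge_mem_pathPts hr hgap.tail hx))

lemma two_le_length_pathPts (r H : ℤ) {ks : List ℤ} (h : ks ≠ []) :
    2 ≤ (pathPts r H ks).length := by
  have htl : ∀ x : ℤ, 2 ≤ (towerPts x r H).length := by
    intro x
    rw [towerPts_eq]
    simp
    omega
  match ks with
  | [x] => rw [pathPts]; exact htl x
  | x :: x' :: rest =>
    rw [pathPts]
    simp only [List.length_append]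
    have := htl x
    omega




lemma exists_maxClique_superset {V : Type*} [Fintype V] (G : SimpleGraph V) {s : Set V}
    (hs : G.IsClique s) : ∃ t ∈ maxCliques G, s ⊆ t := by
  obtain ⟨t, ht, hmax⟩ := Set.Finite.exists_maximalFor id {t : Set V | G.IsClique t ∧ s ⊆ t}
    (Set.toFinite _) ⟨s, hs, subset_rfl⟩
  exact ⟨t, ⟨ht.1, fun u hu htu => le_antisymm htu (hmax ⟨hu, ht.2.trans htu⟩ htu)⟩, ht.2⟩

/-- Every finite simple graph admits a Helly EPG representation. -/
theorem every_graph_is_Helly_EPG {V : Type*} [Fintype V] (G : SimpleGraph V) :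
    ∃ P : V → GridPath, IsEPGRep G P ∧ HellyEPG P := by
  classical
  cases isEmpty_or_nonempty V with
  | inl hV =>
    refine ⟨fun v => isEmptyElim v, fun u v _ => isEmptyElim u, fun T _ =>
      ⟨⟨(0, 0), true⟩, fun i _ => isEmptyElim i⟩⟩
  | inr hV =>
  set n : ℕ := Fintype.card V with hn
  set H : ℤ := (n : ℤ) with hH
  set row : V → ℤ := fun v => ((Fintype.equivFin V v : ℕ) : ℤ) with hrow
  have hrow_lt : ∀ v, row v < H := by
    intro v
    simp only [hrow, hH]
    exact_mod_cast (Fintype.equivFin V v).is_lt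
  have hrow_nonneg : ∀ v, 0 ≤ row v := fun v => Int.natCast_nonneg _
  have hrow_inj : Function.Injective row := by
    intro u v huv
    have : (Fintype.equivFin V u : ℕ) = (Fintype.equivFin V v : ℕ) := by
      simp only [hrow] at huv; exact_mod_cast huv
    exact (Fintype.equivFin V).injective (Fin.ext this)
  set col : Set V → ℤ := fun s => 3 * ((Fintype.equivFin (Set V) s : ℕ) : ℤ) with hcol
  have hcol_div : ∀ s, (3 : ℤ) ∣ col s := fun s => ⟨_, rfl⟩
  have hcol_inj : Function.Injective col := by
    intro s t hst
    simp only [hcol] at hst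
    have : (Fintype.equivFin (Set V) s : ℕ) = (Fintype.equivFin (Set V) t : ℕ) := by omega
    exact (Fintype.equivFin (Set V)).injective (Fin.ext this)
  set ks : V → List ℤ := fun v =>
    ((Finset.univ.filter (fun s : Set V => s ∈ maxCliques G ∧ v ∈ s)).image col).sort (· ≤ ·)
    with hks
  have hmem : ∀ v : V, ∀ x : ℤ,
      x ∈ ks v ↔ ∃ s ∈ maxCliques G, v ∈ s ∧ col s = x := by
    intro v x
    simp only [hks, Finset.mem_sort, Finset.mem_image, Finset.mem_filter, Finset.mem_univ,
      true_and]
    constructor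
    · rintro ⟨s, ⟨hs1, hs2⟩, rfl⟩; exact ⟨s, hs1, hs2, rfl⟩
    · rintro ⟨s, hs1, hs2, rfl⟩; exact ⟨s, ⟨hs1, hs2⟩, rfl⟩
  have hgap : ∀ v, (ks v).Chain' (fun a b => a + 3 ≤ b) := by
    intro v
    have hsorted := Finset.sortedLT_sort
      ((Finset.univ.filter (fun s : Set V => s ∈ maxCliques G ∧ v ∈ s)).image col)
    have hch : (ks v).Chain' (· < ·) := hsorted.isChain
    change List.IsChain _ _ at hch ⊢
    rw [List.isChain_iff_getElem] at hch ⊢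
    intro i hi
    have hlt := hch i hi
    have h1 : (ks v)[i] ∈ ks v := by simp
    have h2 : (ks v)[i + 1] ∈ ks v := by simp
    rw [hmem] at h1 h2
    obtain ⟨s1, -, -, hs1⟩ := h1
    obtain ⟨s2, -, -, hs2⟩ := h2
    have d1 := hcol_div s1
    have d2 := hcol_div s2
    rw [hs1] at d1
    rw [hs2] at d2
    omega
  have hksne : ∀ v, ks v ≠ [] := by
    intro v
    obtain ⟨t, ht, hvt⟩ := exists_maxClique_superset G (G.isClique_singleton v)
    have : col t ∈ ks v := (hmem v _).mpr ⟨t, ht, hvt rfl, rfl⟩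
    exact List.ne_nil_of_mem this
  have hrH : ∀ v, row v ≤ H := fun v => le_of_lt (hrow_lt v)
  set P : V → GridPath := fun v => mkPath (pathPts (row v) H (ks v))
    (two_le_length_pathPts _ _ (hksne v))
    (pathPts_nodup _ _ (hrH v) (hgap v))
    (pathPts_chain _ _ (hrH v) (hgap v)) with hP
  have hPedges : ∀ v, (P v).edges = edgesOf (pathPts (row v) H (ks v)) := fun v => rfl
  -- shared edge implies common column
  have hshared : ∀ u v : V, u ≠ v → ∀ e : GridEdge,
      e ∈ (P u).edges → e ∈ (P v).edges → ∃ x, x ∈ ks u ∧ x ∈ ks v := by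
    intro u v huv e heu hev
    rw [hPedges] at heu hev
    have hu := edges_pathPts (hrH u) (hgap u) heu
    have hv := edges_pathPts (hrH v) (hgap v) hev
    have hne : row u ≠ row v := fun h => huv (hrow_inj h)
    rcases hu with ⟨hu1, hu2⟩ | ⟨hu1, hu2, hu3⟩ | ⟨hu1, x, hx, hu2⟩
    · rcases hv with ⟨hv1, hv2⟩ | ⟨hv1, hv2, hv3⟩ | ⟨hv1, y, hy, hv2⟩
      · exact absurd (hu2.symm.trans hv2) hne
      · exact absurd (hu2.symm.trans hv2) (by have := hrow_lt u; omega)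
      · rw [hu1] at hv1; exact absurd hv1 (by simp)
    · rcases hv with ⟨hv1, hv2⟩ | ⟨hv1, hv2, hv3⟩ | ⟨hv1, y, hy, hv2⟩
      · exact absurd (hv2.symm.trans hu2) (by have := hrow_lt v; omega)
      · exact ⟨e.pt.1, hu3, hv3⟩
      · rw [hu1] at hv1; exact absurd hv1 (by simp)
    · rcases hv with ⟨hv1, hv2⟩ | ⟨hv1, hv2, hv3⟩ | ⟨hv1, y, hy, hv2⟩
      · rw [hu1] at hv1; exact absurd hv1 (by simp)
      · rw [hu1] at hv1; exact absurd hv1 (by simp)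
      · have hdx : (3:ℤ) ∣ x := by
          obtain ⟨s, -, -, hs⟩ := (hmem u x).mp hx
          rw [← hs]; exact hcol_div s
        have hdy : (3:ℤ) ∣ y := by
          obtain ⟨s, -, -, hs⟩ := (hmem v y).mp hy
          rw [← hs]; exact hcol_div s
        have : x = y := by omega
        subst this
        exact ⟨x, hx, hy⟩
  -- common column implies common maximal clique, hence adjacency or sharing
  have hcommon : ∀ u v : V, ∀ x, x ∈ ks u → x ∈ ks v →
      ∃ s ∈ maxCliques G, u ∈ s ∧ v ∈ s := by
    intro u v x hxu hxv
    obtain ⟨s, hs, hus, hcs⟩ := (hmem u x).mp hxu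
    obtain ⟨t, ht, hvt, hct⟩ := (hmem v x).mp hxv
    have : s = t := hcol_inj (by rw [hcs, hct])
    subst this
    exact ⟨s, hs, hus, hvt⟩
  have hEPG : IsEPGRep G P := by
    intro u v huv
    constructor
    · intro hadj
      have hcl : G.IsClique {u, v} := SimpleGraph.isClique_pair.mpr (fun _ => hadj)
      obtain ⟨t, ht, hsub⟩ := exists_maxClique_superset G hcl
      refine ⟨⟨(col t, H), true⟩, ?_, ?_⟩
      · rw [hPedges]
        exact topEdge_mem_pathPts (hrH u) (hgap u)
          ((hmem u _).mpr ⟨t, ht, hsub (by simp), rfl⟩)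
      · rw [hPedges]
        exact topEdge_mem_pathPts (hrH v) (hgap v)
          ((hmem v _).mpr ⟨t, ht, hsub (by simp), rfl⟩)
    · rintro ⟨e, heu, hev⟩
      obtain ⟨x, hxu, hxv⟩ := hshared u v huv e heu hev
      obtain ⟨s, hs, hus, hvs⟩ := hcommon u v x hxu hxv
      exact hs.1 hus hvs huv
  refine ⟨P, hEPG, ?_⟩
  intro T hT
  rcases Set.eq_empty_or_nonempty T with rfl | ⟨i0, hi0⟩
  · exact ⟨⟨(0, 0), true⟩, fun i hi => absurd hi (by simp)⟩
  · have hcl : G.IsClique T := by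
      intro a ha b hb hab
      exact (hEPG a b hab).mpr (hT a ha b hb)
    obtain ⟨t, ht, hsub⟩ := exists_maxClique_superset G hcl
    refine ⟨⟨(col t, H), true⟩, fun i hi => ?_⟩
    rw [hPedges]
    exact topEdge_mem_pathPts (hrH i) (hgap i)
      ((hmem i _).mpr ⟨t, ht, hsub hi, rfl⟩)
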